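/- arXiv:2303.17274 — 2 statements merged into one kernel-verified Lean document; each statement's English description precedes it below -/
import Mathlib

section
/- The Minimum Global-Capacity-Preserving Subgraph problem is NP-hard on directed graphs with unit edge capacities: given a strongly connected directed graph G with unit capacities and α = 1/λ(G) (where λ(G) is the global edge connectivity), an optimal solution—an inclusion of fewest edges E' such that every ordered vertex pair has capacity at least ⌈α·λ(G)⌉ = 1 in (V,E')—has exactly |V| edges if and only if G has a directed Hamiltonian cycle. -/
open scoped Classical

variable {V : Type*}

/-- `IsWalk E u v p`: `p` is a list of edges of `E` forming a directed walk from `u` to `v`. -/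
def IsWalk (E : Finset (V × V)) : V → V → List (V × V) → Prop
  | u, v, [] => u = v
  | u, v, e :: p => e ∈ E ∧ e.1 = u ∧ IsWalk E e.2 v p

/-- A simple directed path from `u` to `v` (no repeated vertices). -/
def IsPath (E : Finset (V × V)) (u v : V) (p : List (V × V)) : Prop :=
  IsWalk E u v p ∧ (u :: p.map Prod.snd).Nodup

/-- With unit edge capacities, the value of a maximum `u`-`v` flow equals the maximum
number of pairwise edge-disjoint `u`-`v` walks. -/
noncomputable def maxFlow (E : Finset (V × V)) (u v : V) : ℕ :=
  sSup {n : ℕ | ∃ ps : List (List (V × V)), ps.length = n ∧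
    (∀ p ∈ ps, IsWalk E u v p) ∧ ps.Pairwise fun p q => ∀ e ∈ p, e ∉ q}

/-- `P_G(u,v)`: the subgraph induced by the edges lying on directed `u`-`v` paths. -/
noncomputable def pathInduced (E : Finset (V × V)) (u v : V) : Finset (V × V) :=
  E.filter fun e => ∃ p, IsPath E u v p ∧ e ∈ p

/-- The set of vertices incident to an edge of `E`. -/
def verts (E : Finset (V × V)) : Set V := {x | ∃ e ∈ E, e.1 = x ∨ e.2 = x}

/-- Two-terminal directed series-parallel graphs, defined recursively by single edges,
series compositions and parallel compositions (compositions identify terminals, and the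
two constituents are otherwise disjoint). -/
inductive IsDSP [DecidableEq V] : Finset (V × V) → V → V → Prop
  | single {s t : V} : s ≠ t → IsDSP {(s, t)} s t
  | series {E₁ E₂ : Finset (V × V)} {s m t : V} :
      IsDSP E₁ s m → IsDSP E₂ m t → Disjoint E₁ E₂ →
      verts E₁ ∩ verts E₂ ⊆ {m} → IsDSP (E₁ ∪ E₂) s t
  | parallel {E₁ E₂ : Finset (V × V)} {s t : V} :
      IsDSP E₁ s t → IsDSP E₂ s t → Disjoint E₁ E₂ →
      verts E₁ ∩ verts E₂ ⊆ {s, t} → IsDSP (E₁ ∪ E₂) s t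

/-- `E` contains a directed Hamiltonian cycle: a closed walk whose length is the number of
vertices and whose sequence of start-vertices has no repetition (hence visits every vertex
exactly once). -/
def HasHamiltonianCycle (V : Type*) [Fintype V] (E : Finset (V × V)) : Prop :=
  ∃ (x : V) (p : List (V × V)),
    IsWalk E x x p ∧ p.length = Fintype.card V ∧ (p.map Prod.fst).Nodup

lemma isWalk_sub {E F : Finset (V × V)} :
    ∀ {p : List (V × V)} {u v : V}, IsWalk E u v p → (∀ e ∈ p, e ∈ F) → IsWalk F u v p
  | [], u, v, h, _ => h
  | e :: p, u, v, h, hF =>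
    ⟨hF e (List.mem_cons_self), h.2.1,
      isWalk_sub h.2.2 fun e' he' => hF e' (List.mem_cons_of_mem _ he')⟩

lemma mem_of_isWalk {E : Finset (V × V)} :
    ∀ {p : List (V × V)} {u v : V} {e : V × V}, IsWalk E u v p → e ∈ p → e ∈ E
  | e' :: p, u, v, e, h, he => by
    rcases List.mem_cons.1 he with rfl | he
    · exact h.1
    · exact mem_of_isWalk h.2.2 he

lemma isWalk_append {E : Finset (V × V)} :
    ∀ {p q : List (V × V)} {u v w : V},
      IsWalk E u v p → IsWalk E v w q → IsWalk E u w (p ++ q)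
  | [], q, u, v, w, h, h' => by cases h; exact h'
  | e :: p, q, u, v, w, h, h' => ⟨h.1, h.2.1, isWalk_append h.2.2 h'⟩

lemma isWalk_split {E : Finset (V × V)} :
    ∀ {p q : List (V × V)} {u w : V},
      IsWalk E u w (p ++ q) → ∃ v, IsWalk E u v p ∧ IsWalk E v w q
  | [], q, u, w, h => ⟨u, rfl, h⟩
  | e :: p, q, u, w, h => by
    obtain ⟨v, hv, hv'⟩ := isWalk_split (p := p) h.2.2
    exact ⟨v, ⟨h.1, h.2.1, hv⟩, hv'⟩

lemma bddAbove_flowSet {E : Finset (V × V)} {u v : V} (huv : u ≠ v) :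
    BddAbove {n : ℕ | ∃ ps : List (List (V × V)), ps.length = n ∧
      (∀ p ∈ ps, IsWalk E u v p) ∧ ps.Pairwise fun p q => ∀ e ∈ p, e ∉ q} := by
  classical
  refine ⟨E.card, fun n hn => ?_⟩
  obtain ⟨ps, hlen, hwalk, hpw⟩ := hn
  have hne : ∀ p ∈ ps, p ≠ [] := by
    intro p hp hpe
    subst hpe
    exact huv (hwalk [] hp)
  have hpw' : ps.Pairwise fun p q => p.head? ≠ q.head? := by
    refine hpw.imp_of_mem ?_
    intro p q hp hq hR hEq
    obtain ⟨e, t, rfl⟩ := List.exists_cons_of_ne_nil (hne p hp)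
    obtain ⟨e', t', rfl⟩ := List.exists_cons_of_ne_nil (hne q hq)
    simp only [List.head?_cons, Option.some.injEq] at hEq
    exact hR e (List.mem_cons_self) (hEq ▸ List.mem_cons_self)
  have hnd : (ps.map List.head?).Nodup := List.pairwise_map.2 hpw'
  have hsub : (ps.map List.head?).toFinset ⊆ E.image some := by
    intro x hx
    simp only [List.mem_toFinset, List.mem_map] at hx
    obtain ⟨p, hp, rfl⟩ := hx
    obtain ⟨e, t, rfl⟩ := List.exists_cons_of_ne_nil (hne p hp)
    exact Finset.mem_image_of_mem _ (mem_of_isWalk (hwalk _ hp) (List.mem_cons_self))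
  calc n = (ps.map List.head?).length := by simp [hlen]
    _ = (ps.map List.head?).toFinset.card := (List.toFinset_card_of_nodup hnd).symm
    _ ≤ (E.image some).card := Finset.card_le_card hsub
    _ ≤ E.card := Finset.card_image_le

lemma one_le_maxFlow_iff {E : Finset (V × V)} {u v : V} (huv : u ≠ v) :
    1 ≤ maxFlow E u v ↔ ∃ p, IsWalk E u v p := by
  constructor
  · intro h
    have hmem := Nat.sSup_mem (s := {n : ℕ | ∃ ps : List (List (V × V)), ps.length = n ∧
        (∀ p ∈ ps, IsWalk E u v p) ∧ ps.Pairwise fun p q => ∀ e ∈ p, e ∉ q})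
      ⟨0, [], rfl, by simp, List.Pairwise.nil⟩ (bddAbove_flowSet huv)
    obtain ⟨ps, hlen, hwalk, _⟩ := hmem
    match ps, hlen with
    | [], hlen =>
      have h0 : maxFlow E u v = 0 := by simpa [maxFlow] using hlen.symm
      omega
    | p :: ps, _ => exact ⟨p, hwalk p (List.mem_cons_self)⟩
  · rintro ⟨p, hp⟩
    exact le_csSup (bddAbove_flowSet huv) ⟨[p], rfl, by simpa using hp, by simp⟩

lemma isWalk_iterate {E : Finset (V × V)} {f : V → V} (hf : ∀ w, (w, f w) ∈ E) :
    ∀ (m : ℕ) (a : V),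
      IsWalk E a (f^[m] a) ((List.range m).map fun k => (f^[k] a, f^[k + 1] a))
  | 0, a => rfl
  | m + 1, a => by
    rw [List.range_succ_eq_map, List.map_cons, List.map_map]
    refine ⟨by simpa using hf a, rfl, ?_⟩
    have := isWalk_iterate hf m (f a)
    simpa [Function.comp_def, Function.iterate_succ_apply] using this

lemma exists_out_edge [Fintype V] {E'' : Finset (V × V)} (hV : 1 < Fintype.card V)
    (hc : ∀ u v : V, u ≠ v → 1 ≤ maxFlow E'' u v) (w : V) : ∃ e ∈ E'', e.1 = w := by
  obtain ⟨w', hw'⟩ := Fintype.exists_ne_of_one_lt_card hV w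
  obtain ⟨p, hp⟩ := (one_le_maxFlow_iff (Ne.symm hw')).1 (hc w w' (Ne.symm hw'))
  match p, hp with
  | [], hp => exact absurd hp.symm hw'
  | e :: p, hp => exact ⟨e, hp.1, hp.2.1⟩

lemma card_V_le [Fintype V] {E'' : Finset (V × V)} (hV : 1 < Fintype.card V)
    (hc : ∀ u v : V, u ≠ v → 1 ≤ maxFlow E'' u v) : Fintype.card V ≤ E''.card := by
  classical
  choose g hgmem hgfst using exists_out_edge hV hc
  have := Finset.card_le_card_of_injOn (s := Finset.univ) g (fun a _ => hgmem a)
    (fun a _ b _ h => by rw [← hgfst a, ← hgfst b, h])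
  simpa using this

lemma forward_dir [Fintype V] {E E' : Finset (V × V)} (hV : 1 < Fintype.card V)
    (hE'sub : E' ⊆ E) (hc : ∀ u v : V, u ≠ v → 1 ≤ maxFlow E' u v)
    (hcard : E'.card = Fintype.card V) : HasHamiltonianCycle V E := by
  classical
  have hNe : Nonempty V := Fintype.card_pos_iff.1 (by omega)
  choose g hgmem hgfst using exists_out_edge hV hc
  have hginj : Set.InjOn g (Finset.univ : Finset V) :=
    fun a _ b _ h => by rw [← hgfst a, ← hgfst b, h]
  have himg : Finset.univ.image g = E' := by
    apply Finset.eq_of_subset_of_card_le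
    · intro e he
      obtain ⟨w, -, rfl⟩ := Finset.mem_image.1 he
      exact hgmem w
    · rw [Finset.card_image_of_injOn hginj, hcard, Finset.card_univ]
  set f : V → V := fun w => (g w).2 with hfdef
  have hgw : ∀ w, g w = (w, f w) := by
    intro w
    rw [hfdef]
    exact Prod.ext (hgfst w) rfl
  have hedge : ∀ e ∈ E', e = (e.1, f e.1) := by
    intro e he
    rw [← himg] at he
    obtain ⟨w, -, rfl⟩ := Finset.mem_image.1 he
    simp [hgw w]
  have hwalk_iter : ∀ (p : List (V × V)) (a b : V), IsWalk E' a b p → b = f^[p.length] a := by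
    intro p
    induction p with
    | nil => exact fun a b h => h.symm
    | cons e p ih =>
      intro a b h
      have he2 : e.2 = f a := by
        conv_lhs => rw [hedge e h.1]
        rw [h.2.1]
      rw [List.length_cons, Function.iterate_succ_apply, ← he2]
      exact ih e.2 b h.2.2
  have hreach : ∀ a b : V, ∃ k, f^[k] a = b := by
    intro a b
    by_cases hab : a = b
    · exact ⟨0, hab⟩
    · obtain ⟨p, hp⟩ := (one_le_maxFlow_iff hab).1 (hc a b hab)
      exact ⟨p.length, (hwalk_iter p a b hp).symm⟩
  obtain ⟨u⟩ := hNe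
  have hfu : f u ≠ u := by
    intro h
    obtain ⟨w', hw'⟩ := Fintype.exists_ne_of_one_lt_card hV u
    obtain ⟨k, hk⟩ := hreach u w'
    rw [Function.iterate_fixed h] at hk
    exact hw' hk.symm
  have hex : ∃ d, 0 < d ∧ f^[d] u = u := by
    obtain ⟨k, hk⟩ := hreach (f u) u
    exact ⟨k + 1, Nat.succ_pos _, by rwa [Function.iterate_succ_apply]⟩
  set d := Nat.find hex with hd
  obtain ⟨hdpos, hdu⟩ := Nat.find_spec hex
  have hmin : ∀ m < d, ¬(0 < m ∧ f^[m] u = u) := fun m hm => Nat.find_min hex hm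
  have hmod : ∀ k, f^[k] u = f^[k % d] u := by
    intro k
    conv_lhs => rw [← Nat.div_add_mod k d]
    generalize k / d = q
    induction q with
    | zero => simp
    | succ q ih =>
      have heq : d * (q + 1) + k % d = (d * q + k % d) + d := by ring
      rw [heq, Function.iterate_add_apply, hdu, ← ih]
  have hinj : ∀ i < d, ∀ j < d, f^[i] u = f^[j] u → i = j := by
    have key : ∀ i j, i ≤ j → j < d → f^[i] u = f^[j] u → i = j := by
      intro i j hij hjd hEq
      by_contra hne
      have hij' : i < j := lt_of_le_of_ne hij hne
      have hfix : f^[d - j + i] u = u := by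
        calc f^[d - j + i] u = f^[d - j] (f^[i] u) := Function.iterate_add_apply f _ i u
          _ = f^[d - j] (f^[j] u) := by rw [hEq]
          _ = f^[d - j + j] u := (Function.iterate_add_apply f _ j u).symm
          _ = f^[d] u := by rw [Nat.sub_add_cancel hjd.le]
          _ = u := hdu
      exact hmin _ (by omega) ⟨by omega, hfix⟩
    intro i hi j hj hEq
    rcases le_total i j with h | h
    · exact key i j h hj hEq
    · exact (key j i h hi hEq.symm).symm
  have hndL : ((List.range d).map fun k => f^[k] u).Nodup := by
    refine List.Nodup.map_on ?_ List.nodup_range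
    intro i hi j hj h
    exact hinj i (List.mem_range.1 hi) j (List.mem_range.1 hj) h
  have hdn : d = Fintype.card V := by
    have h1 : d ≤ Fintype.card V := by simpa using hndL.length_le_card
    have h2 : Fintype.card V ≤ d := by
      have hsub : (Finset.univ : Finset V) ⊆ (Finset.range d).image fun k => f^[k] u := by
        intro b _
        obtain ⟨k, hk⟩ := hreach u b
        exact Finset.mem_image.2 ⟨k % d, Finset.mem_range.2 (Nat.mod_lt _ hdpos),
          by rw [← hmod, hk]⟩
      calc Fintype.card V = (Finset.univ : Finset V).card := Finset.card_univ.symm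
        _ ≤ _ := Finset.card_le_card hsub
        _ ≤ (Finset.range d).card := Finset.card_image_le
        _ = d := Finset.card_range d
    omega
  have hf : ∀ w, (w, f w) ∈ E := fun w => hE'sub (hgw w ▸ hgmem w)
  refine ⟨u, (List.range d).map fun k => (f^[k] u, f^[k + 1] u), ?_, by simp [hdn], ?_⟩
  · have := isWalk_iterate hf d u
    rwa [hdu] at this
  · rw [List.map_map]
    have hcomp : (Prod.fst ∘ fun k => (f^[k] u, f^[k + 1] u)) = fun k => f^[k] u := rfl
    rw [hcomp]
    exact hndL

lemma backward_dir [Fintype V] [DecidableEq V] {E : Finset (V × V)}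
    (h : HasHamiltonianCycle V E) :
    ∃ E' ⊆ E, (∀ u v : V, u ≠ v → 1 ≤ maxFlow E' u v) ∧ E'.card = Fintype.card V := by
  obtain ⟨x, p, hwalk, hlen, hnd⟩ := h
  have hpnd : p.Nodup := hnd.of_map
  refine ⟨p.toFinset, fun e he => mem_of_isWalk hwalk (List.mem_toFinset.1 he), ?_, ?_⟩
  · have hwalk' : IsWalk p.toFinset x x p :=
      isWalk_sub hwalk fun e he => List.mem_toFinset.2 he
    have hall : ∀ a : V, (∃ q, IsWalk p.toFinset x a q) ∧ ∃ q, IsWalk p.toFinset a x q := by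
      intro a
      have h1 : (p.map Prod.fst).toFinset = Finset.univ := by
        apply Finset.eq_univ_of_card
        rw [List.toFinset_card_of_nodup hnd]
        simpa using hlen
      have ha : a ∈ (p.map Prod.fst).toFinset := h1 ▸ Finset.mem_univ a
      rw [List.mem_toFinset, List.mem_map] at ha
      obtain ⟨e, he, hfst⟩ := ha
      obtain ⟨⟨i, hi⟩, rfl⟩ := List.mem_iff_get.1 he
      have hw2 : IsWalk p.toFinset x x (p.take i ++ p.drop i) := by
        rw [List.take_append_drop]
        exact hwalk'
      obtain ⟨m, hm1, hm2⟩ := isWalk_split hw2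
      have hdrop : p.drop i = p.get ⟨i, hi⟩ :: p.drop (i + 1) := by
        rw [List.drop_eq_getElem_cons hi]
        rfl
      have hma : m = (p.get ⟨i, hi⟩).1 := by
        rw [hdrop] at hm2
        exact hm2.2.1.symm
      rw [hfst] at hma
      subst hma
      exact ⟨⟨_, hm1⟩, ⟨_, hm2⟩⟩
    intro u v huv
    rw [one_le_maxFlow_iff huv]
    obtain ⟨q1, hq1⟩ := (hall u).2
    obtain ⟨q2, hq2⟩ := (hall v).1
    exact ⟨q1 ++ q2, isWalk_append hq1 hq2⟩
  · rw [List.toFinset_card_of_nodup hpnd, hlen]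

/-- core of the NP-hardness of MGCPS: for a strongly connected directed
graph `G` with unit capacities and `α = 1/λ(G)`, every ordered pair is required to keep
capacity at least `⌈α·λ(G)⌉ = 1`; an optimal such subgraph has exactly `|V|` edges if and
only if `G` has a directed Hamiltonian cycle. -/
theorem mgcps_optimum_card_iff_hamiltonian [Fintype V] [DecidableEq V]
    (E : Finset (V × V)) (hV : 1 < Fintype.card V)
    (hconn : ∀ u v : V, ∃ p, IsWalk E u v p) :
    (∃ E' ⊆ E, (∀ u v : V, u ≠ v → 1 ≤ maxFlow E' u v) ∧
        E'.card = Fintype.card V ∧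
        ∀ E'' ⊆ E, (∀ u v : V, u ≠ v → 1 ≤ maxFlow E'' u v) → E'.card ≤ E''.card) ↔
      HasHamiltonianCycle V E := by
  constructor
  · rintro ⟨E', hsub, hconn', hcard, -⟩
    exact forward_dir hV hsub hconn' hcard
  · intro h
    obtain ⟨E', hsub, hconn', hcard⟩ := backward_dir h
    exact ⟨E', hsub, hconn', hcard, fun E'' _ hc => hcard ▸ card_V_le hV hc⟩
end

section
/- Let G be a directed graph satisfying Properties P1 and P2 (a laminar series-parallel graph) with unit capacities and α = min over reachable ordered pairs (s,t) of 1/maxflow_G(s,t). Then the α-MCPS problem coincides with the minimum equivalent digraph problem, and an optimal solution is the set of edges uv such that the edge uv is the only directed u-v path in G. -/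
open scoped Classical

variable {V : Type*}

/-! ### Auxiliary lemmas about walks and paths -/

lemma walk_mem_E {E : Finset (V × V)} : ∀ {u v : V} {p : List (V × V)},
    IsWalk E u v p → ∀ f ∈ p, f ∈ E := by
  intro u v p
  induction p generalizing u with
  | nil => intro _ f hf; simp at hf
  | cons e p ih =>
    rintro ⟨he, _, hw⟩ f hf
    rcases List.mem_cons.1 hf with rfl | hf
    · exact he
    · exact ih hw f hf

lemma walk_append {E : Finset (V × V)} : ∀ {u v w : V} {p q : List (V × V)},
    IsWalk E u v p → IsWalk E v w q → IsWalk E u w (p ++ q) := by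
  intro u v w p
  induction p generalizing u with
  | nil => intro q h hq; cases h; simpa using hq
  | cons e p ih =>
    rintro q ⟨he, h1, hw⟩ hq
    exact ⟨he, h1, ih hw hq⟩

lemma walk_split {E : Finset (V × V)} {e : V × V} : ∀ {u v : V} {p q : List (V × V)},
    IsWalk E u v (p ++ e :: q) → IsWalk E u e.1 p ∧ e ∈ E ∧ IsWalk E e.2 v q := by
  intro u v p
  induction p generalizing u with
  | nil => rintro q ⟨he, h1, hw⟩; exact ⟨h1.symm, he, hw⟩
  | cons f p ih =>
    rintro q ⟨hf, h1, hw⟩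
    obtain ⟨hw1, he, hw2⟩ := ih hw
    exact ⟨⟨hf, h1, hw1⟩, he, hw2⟩

lemma walk_last_snd {E : Finset (V × V)} : ∀ {u v : V} {p : List (V × V)},
    IsWalk E u v p → p ≠ [] → v ∈ p.map Prod.snd := by
  intro u v p
  induction p generalizing u with
  | nil => intro _ h; exact absurd rfl h
  | cons e p ih =>
    rintro ⟨_, _, hw⟩ _
    rcases p with _ | ⟨f, p⟩
    · cases hw; simp
    · simpa using Or.inr (by simpa using ih hw (by simp))

lemma walk_restrict {E D : Finset (V × V)} : ∀ {u v : V} {p : List (V × V)},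
    IsWalk E u v p → (∀ f ∈ p, f ∈ D) → IsWalk D u v p := by
  intro u v p
  induction p generalizing u with
  | nil => intro h _; exact h
  | cons e p ih =>
    rintro ⟨he, h1, hw⟩ hD
    exact ⟨hD e (by simp), h1, ih hw fun f hf => hD f (by simp [hf])⟩

lemma walk_mono {E E' : Finset (V × V)} {u v : V} {p : List (V × V)}
    (hE : E' ⊆ E) (h : IsWalk E' u v p) : IsWalk E u v p :=
  walk_restrict h fun f hf => hE (walk_mem_E h f hf)

lemma walk_concat {E F : Finset (V × V)} : ∀ {u v : V} {q : List (V × V)},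
    IsWalk E u v q → (∀ f ∈ q, ∃ w, IsWalk F f.1 f.2 w) → ∃ w, IsWalk F u v w := by
  intro u v q
  induction q generalizing u with
  | nil => intro h _; exact ⟨[], h⟩
  | cons e q ih =>
    rintro ⟨he, h1, hw⟩ hF
    obtain ⟨w1, hw1⟩ := hF e (by simp)
    obtain ⟨w2, hw2⟩ := ih hw fun f hf => hF f (by simp [hf])
    exact ⟨w1 ++ w2, walk_append (h1 ▸ hw1) hw2⟩

lemma walk_to_path_aux {E : Finset (V × V)} : ∀ (n : ℕ) (u v : V) (p : List (V × V)),
    p.length ≤ n → IsWalk E u v p → ∃ q, IsPath E u v q ∧ ∀ f ∈ q, f ∈ p := by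
  intro n
  induction n with
  | zero =>
    intro u v p hlen hw
    rw [List.length_eq_zero_iff.1 (Nat.le_zero.1 hlen)] at hw ⊢
    exact ⟨[], ⟨hw, by simp⟩, by simp⟩
  | succ n ih =>
    intro u v p hlen hw
    by_cases hu : u ∈ p.map Prod.snd
    · obtain ⟨f, hf, h2⟩ := List.mem_map.1 hu
      obtain ⟨p₁, p₂, rfl⟩ := List.append_of_mem hf
      obtain ⟨_, _, hw2⟩ := walk_split hw
      rw [h2] at hw2
      obtain ⟨q, hq, hsub⟩ := ih u v p₂ (by
        have := hlen; simp [List.length_append] at this ⊢; omega) hw2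
      exact ⟨q, hq, fun g hg => by simp [hsub g hg]⟩
    · rcases p with _ | ⟨e, p'⟩
      · exact ⟨[], ⟨hw, by simp⟩, by simp⟩
      · obtain ⟨he, h1, hw'⟩ := hw
        obtain ⟨q, ⟨hqw, hqnd⟩, hsub⟩ := ih e.2 v p' (by simpa using hlen) hw'
        simp only [List.map_cons, List.mem_cons, not_or] at hu
        refine ⟨e :: q, ⟨⟨he, h1, hqw⟩, ?_⟩, ?_⟩
        · simp only [List.map_cons, List.nodup_cons] at hqnd ⊢
          refine ⟨?_, hqnd⟩
          simp only [List.mem_cons, not_or]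
          refine ⟨hu.1, fun h => ?_⟩
          rcases List.mem_map.1 h with ⟨g, hg, hg2⟩
          exact hu.2 (List.mem_map.2 ⟨g, hsub g hg, hg2⟩)
        · intro g hg
          rcases List.mem_cons.1 hg with rfl | hg
          · simp
          · simp [hsub g hg]

lemma walk_to_path {E : Finset (V × V)} {u v : V} {p : List (V × V)}
    (hw : IsWalk E u v p) : ∃ q, IsPath E u v q ∧ ∀ f ∈ q, f ∈ p :=
  walk_to_path_aux p.length u v p le_rfl hw

lemma path_self {E : Finset (V × V)} {u v : V} {q : List (V × V)}
    (hq : IsPath E u v q) (hmem : (u, v) ∈ q) : q = [(u, v)] := by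
  obtain ⟨hw, hnd⟩ := hq
  obtain ⟨q₁, q₂, rfl⟩ := List.append_of_mem hmem
  obtain ⟨hw1, _, hw2⟩ := walk_split hw
  simp only [List.nodup_cons, List.map_append, List.map_cons] at hnd
  have hq₁ : q₁ = [] := by
    by_contra h
    exact hnd.1 (by simp [walk_last_snd hw1 h])
  subst hq₁
  have hq₂ : q₂ = [] := by
    by_contra h
    have h1 := walk_last_snd hw2 h
    have h2 := hnd.2
    simp only [List.map_nil, List.nil_append, List.nodup_cons] at h2
    exact h2.1 h1
  simp [hq₂]

/-! ### Structure of series-parallel graphs -/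

lemma mem_verts_union [DecidableEq V] {E₁ E₂ : Finset (V × V)} {x : V} :
    x ∈ verts (E₁ ∪ E₂) ↔ x ∈ verts E₁ ∨ x ∈ verts E₂ := by
  constructor
  · rintro ⟨e, he, h⟩
    rcases Finset.mem_union.1 he with he | he
    · exact Or.inl ⟨e, he, h⟩
    · exact Or.inr ⟨e, he, h⟩
  · rintro (⟨e, he, h⟩ | ⟨e, he, h⟩) <;>
      exact ⟨e, Finset.mem_union.2 (by tauto), h⟩

lemma dsp_struct [DecidableEq V] {D : Finset (V × V)} {s t : V} (h : IsDSP D s t) :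
    s ≠ t ∧ s ∈ verts D ∧ t ∈ verts D ∧
      (∀ g ∈ D, g.2 ≠ s) ∧ (∀ g ∈ D, g.1 ≠ t) := by
  induction h with
  | @single s t hst =>
    refine ⟨hst, ⟨(s, t), by simp, Or.inl rfl⟩, ⟨(s, t), by simp, Or.inr rfl⟩, ?_, ?_⟩ <;>
      · intro g hg
        simp only [Finset.mem_singleton] at hg
        subst hg
        simp [hst, Ne.symm hst]
  | @series E₁ E₂ s m t h1 h2 hdisj hm ih1 ih2 =>
    obtain ⟨hsm, hs1, hm1, hin1, hout1⟩ := ih1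
    obtain ⟨hmt, hm2, ht2, hin2, hout2⟩ := ih2
    have hsnot2 : s ∉ verts E₂ := fun hs2 => hsm (hm ⟨hs1, hs2⟩)
    have htnot1 : t ∉ verts E₁ := fun ht1 => hmt (hm ⟨ht1, ht2⟩).symm
    refine ⟨?_, mem_verts_union.2 (Or.inl hs1), mem_verts_union.2 (Or.inr ht2), ?_, ?_⟩
    · rintro rfl; exact htnot1 hs1
    · intro g hg hgs
      rcases Finset.mem_union.1 hg with hg | hg
      · exact hin1 g hg hgs
      · exact hsnot2 ⟨g, hg, Or.inr hgs⟩
    · intro g hg hgt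
      rcases Finset.mem_union.1 hg with hg | hg
      · exact htnot1 ⟨g, hg, Or.inl hgt⟩
      · exact hout2 g hg hgt
  | @parallel E₁ E₂ s t h1 h2 hdisj hst ih1 ih2 =>
    obtain ⟨hs, hs1, ht1, hin1, hout1⟩ := ih1
    obtain ⟨_, hs2, ht2, hin2, hout2⟩ := ih2
    refine ⟨hs, mem_verts_union.2 (Or.inl hs1), mem_verts_union.2 (Or.inl ht1), ?_, ?_⟩
    · intro g hg
      rcases Finset.mem_union.1 hg with hg | hg
      · exact hin1 g hg
      · exact hin2 g hg
    · intro g hg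
      rcases Finset.mem_union.1 hg with hg | hg
      · exact hout1 g hg
      · exact hout2 g hg

lemma walk_singleton {D : Finset (V × V)} {f : V × V} : ∀ {u v : V} {p : List (V × V)},
    IsWalk D u v p → f ∈ p → (∀ g ∈ D, g.2 ≠ f.1) → (∀ g ∈ D, g.1 ≠ f.2) →
    p = [f] ∧ u = f.1 ∧ v = f.2 := by
  intro u v p
  induction p generalizing u with
  | nil => intro _ hf; simp at hf
  | cons e p ih =>
    rintro ⟨he, h1, hw⟩ hf hin hout
    rcases List.mem_cons.1 hf with rfl | hf
    · rcases p with _ | ⟨g, p⟩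
      · exact ⟨rfl, h1.symm, hw.symm⟩
      · exact absurd hw.2.1 (hout g hw.1)
    · obtain ⟨rfl, h2, h3⟩ := ih hw hf hin hout
      exact absurd h2 (hin e he)

lemma path_mem_pathInduced {E : Finset (V × V)} {u v : V} {q : List (V × V)}
    (hq : IsPath E u v q) {f : V × V} (hf : f ∈ q) : f ∈ pathInduced E u v :=
  Finset.mem_filter.2 ⟨walk_mem_E hq.1 f hf, q, hq, hf⟩

lemma edge_path {E : Finset (V × V)} {e : V × V} (he : e ∈ E) (hne : e.1 ≠ e.2) :
    IsPath E e.1 e.2 [e] :=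
  ⟨⟨he, rfl, rfl⟩, by simp [hne]⟩

lemma self_mem_pathInduced {E : Finset (V × V)} {e : V × V} (he : e ∈ E)
    (hne : e.1 ≠ e.2) : e ∈ pathInduced E e.1 e.2 :=
  path_mem_pathInduced (edge_path he hne) (by simp)

/-- Key lemma: if `f` lies on an `e.1`-`e.2` path and `f ≠ e`, then
`pathInduced` of `f` is strictly inside that of `e`. -/
lemma key_lemma [DecidableEq V] {E : Finset (V × V)}
    (hsimple : ∀ e ∈ E, e.1 ≠ e.2)
    (hP1 : ∀ s t : V, pathInduced E s t = ∅ ∨ IsDSP (pathInduced E s t) s t)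
    (hP2 : ∀ e₁ ∈ E, ∀ e₂ ∈ E,
      pathInduced E e₁.1 e₁.2 ⊆ pathInduced E e₂.1 e₂.2 ∨
      pathInduced E e₂.1 e₂.2 ⊆ pathInduced E e₁.1 e₁.2 ∨
      Disjoint (pathInduced E e₁.1 e₁.2) (pathInduced E e₂.1 e₂.2))
    {e f : V × V} (he : e ∈ E) {q : List (V × V)} (hq : IsPath E e.1 e.2 q)
    (hfq : f ∈ q) (hfe : f ≠ e) :
    pathInduced E f.1 f.2 ⊂ pathInduced E e.1 e.2 := by
  have hfE : f ∈ E := walk_mem_E hq.1 f hfq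
  have hfP : f ∈ pathInduced E e.1 e.2 := path_mem_pathInduced hq hfq
  have hfPf : f ∈ pathInduced E f.1 f.2 :=
    self_mem_pathInduced hfE (hsimple f hfE)
  have hrev : ¬ pathInduced E e.1 e.2 ⊆ pathInduced E f.1 f.2 := by
    intro hsub
    have hne : pathInduced E f.1 f.2 ≠ ∅ := fun h => by simp [h] at hfPf
    have hdsp : IsDSP (pathInduced E f.1 f.2) f.1 f.2 :=
      (hP1 f.1 f.2).resolve_left hne
    obtain ⟨-, -, -, hin, hout⟩ := dsp_struct hdsp
    have hqD : IsWalk (pathInduced E f.1 f.2) e.1 e.2 q :=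
      walk_restrict hq.1 fun g hg => hsub (path_mem_pathInduced hq hg)
    obtain ⟨rfl, h1, h2⟩ := walk_singleton hqD hfq hin hout
    exact hfe (Prod.ext h1.symm h2.symm)
  have hnested : pathInduced E f.1 f.2 ⊆ pathInduced E e.1 e.2 := by
    rcases hP2 f hfE e he with h | h | h
    · exact h
    · exact absurd h hrev
    · exact absurd hfP (Finset.disjoint_left.1 h hfPf)
  exact Finset.ssubset_iff_subset_ne.2
    ⟨hnested, fun h => hrev (h ▸ Finset.Subset.refl _)⟩

/-! ### maxFlow lemmas -/

def flowSet (E : Finset (V × V)) (u v : V) : Set ℕ :=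
  {n : ℕ | ∃ ps : List (List (V × V)), ps.length = n ∧
    (∀ p ∈ ps, IsWalk E u v p) ∧ ps.Pairwise fun p q => ∀ e ∈ p, e ∉ q}

lemma maxFlow_eq (E : Finset (V × V)) (u v : V) :
    maxFlow E u v = sSup (flowSet E u v) := rfl

lemma zero_mem_flowSet (E : Finset (V × V)) (u v : V) : 0 ∈ flowSet E u v :=
  ⟨[], rfl, by simp, by simp⟩

lemma flowSet_le_card {E : Finset (V × V)} {u v : V} (huv : u ≠ v) :
    ∀ n ∈ flowSet E u v, n ≤ E.card := by
  rintro n ⟨ps, rfl, hall, hpair⟩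
  haveI : Inhabited (V × V) := ⟨(u, u)⟩
  have hne : ∀ p ∈ ps, p ≠ [] := by
    intro p hp h
    subst h
    exact huv (hall [] hp)
  have hhead : ∀ p ∈ ps, p.headI ∈ p := by
    intro p hp
    cases p with
    | nil => exact absurd rfl (hne [] hp)
    | cons a l => simp [List.headI]
  have hnd : (ps.map List.headI).Nodup := by
    rw [List.Nodup, List.pairwise_map]
    refine hpair.imp_of_mem ?_
    intro p q hp hq hpq h
    exact hpq p.headI (hhead p hp) (h ▸ hhead q hq)
  have hsub : (ps.map List.headI).toFinset ⊆ E := by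
    intro x hx
    rw [List.mem_toFinset, List.mem_map] at hx
    obtain ⟨p, hp, rfl⟩ := hx
    exact walk_mem_E (hall p hp) _ (hhead p hp)
  calc ps.length = (ps.map List.headI).length := by simp
    _ = (ps.map List.headI).toFinset.card := (List.toFinset_card_of_nodup hnd).symm
    _ ≤ E.card := Finset.card_le_card hsub

lemma bddAbove_flowSet_s17 {E : Finset (V × V)} {u v : V} (huv : u ≠ v) :
    BddAbove (flowSet E u v) :=
  ⟨E.card, fun n hn => flowSet_le_card huv n hn⟩

lemma maxFlow_self (E : Finset (V × V)) (u : V) : maxFlow E u u = 0 := by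
  rw [maxFlow_eq, csSup_of_not_bddAbove, csSup_empty]
  · rfl
  · rintro ⟨N, hN⟩
    have : N + 1 ∈ flowSet E u u := by
      refine ⟨List.replicate (N + 1) [], by simp, ?_, ?_⟩
      · intro p hp
        rw [List.eq_of_mem_replicate hp]
        rfl
      · exact List.pairwise_replicate.2 (by simp)
    have := hN this
    omega

lemma one_le_maxFlow {E : Finset (V × V)} {u v : V} {p : List (V × V)}
    (hw : IsWalk E u v p) (huv : u ≠ v) : 1 ≤ maxFlow E u v :=
  le_csSup (bddAbove_flowSet_s17 huv) ⟨[p], rfl, by simpa using hw, by simp⟩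

lemma exists_walk_of_maxFlow_pos {E : Finset (V × V)} {u v : V}
    (h : 1 ≤ maxFlow E u v) : ∃ p, IsWalk E u v p := by
  by_cases hb : BddAbove (flowSet E u v)
  · have hmem : maxFlow E u v ∈ flowSet E u v :=
      Nat.sSup_mem ⟨0, zero_mem_flowSet E u v⟩ hb
    obtain ⟨ps, hlen, hall, -⟩ := hmem
    rcases ps with _ | ⟨p, ps⟩
    · simp at hlen; omega
    · exact ⟨p, hall p (by simp)⟩
  · rw [maxFlow_eq, csSup_of_not_bddAbove hb, csSup_empty] at h
    simp at h

lemma maxFlow_le_card {E : Finset (V × V)} {u v : V} (huv : u ≠ v) :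
    maxFlow E u v ≤ E.card :=
  csSup_le ⟨0, zero_mem_flowSet E u v⟩ (flowSet_le_card huv)

/-! ### Reachability in the transitive reduction -/

lemma reach_reduction [DecidableEq V] {E : Finset (V × V)}
    (hsimple : ∀ e ∈ E, e.1 ≠ e.2)
    (hP1 : ∀ s t : V, pathInduced E s t = ∅ ∨ IsDSP (pathInduced E s t) s t)
    (hP2 : ∀ e₁ ∈ E, ∀ e₂ ∈ E,
      pathInduced E e₁.1 e₁.2 ⊆ pathInduced E e₂.1 e₂.2 ∨
      pathInduced E e₂.1 e₂.2 ⊆ pathInduced E e₁.1 e₁.2 ∨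
      Disjoint (pathInduced E e₁.1 e₁.2) (pathInduced E e₂.1 e₂.2)) :
    ∀ (n : ℕ) (e : V × V), e ∈ E → (pathInduced E e.1 e.2).card ≤ n →
      ∃ p, IsWalk (E.filter fun e => ∀ q, IsPath E e.1 e.2 q → q = [e]) e.1 e.2 p := by
  intro n
  induction n with
  | zero =>
    intro e he hcard
    have hpos := Finset.card_pos.2 ⟨e, self_mem_pathInduced he (hsimple e he)⟩
    exact absurd hcard (by omega)
  | succ n ih =>
    intro e he hcard
    by_cases heF : e ∈ E.filter fun e => ∀ q, IsPath E e.1 e.2 q → q = [e]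
    · exact ⟨[e], heF, rfl, rfl⟩
    · have hprop : ¬ ∀ q, IsPath E e.1 e.2 q → q = [e] := fun h =>
        heF (Finset.mem_filter.2 ⟨he, h⟩)
      push_neg at hprop
      obtain ⟨q, hq, hqe⟩ := hprop
      have hfq : ∀ f ∈ q, f ≠ e := by
        intro f hf hfe0
        apply hqe
        have hmem : (e.1, e.2) ∈ q := by rw [Prod.mk.eta, ← hfe0]; exact hf
        have h := path_self hq hmem
        rwa [Prod.mk.eta] at h
      refine walk_concat hq.1 ?_
      intro f hf
      have hlt := key_lemma hsimple hP1 hP2 he hq hf (hfq f hf)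
      exact ih f (walk_mem_E hq.1 f hf)
        (by have := Finset.card_lt_card hlt; omega)

/-- on a laminar series-parallel graph with
`α = min over reachable ordered pairs (s,t) of 1 / maxflow(s,t)`, the `α`-MCPS problem
coincides with the minimum equivalent digraph problem, and the transitive-reduction rule
(keep `uv` iff the edge `uv` is the only directed `u`-`v` path) yields a minimum
reachability-preserving subgraph. -/
theorem lsp_mcps_is_med [Fintype V] [DecidableEq V] (E : Finset (V × V))
    (hsimple : ∀ e ∈ E, e.1 ≠ e.2)
    (hP1 : ∀ s t : V, pathInduced E s t = ∅ ∨ IsDSP (pathInduced E s t) s t)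
    (hP2 : ∀ e₁ ∈ E, ∀ e₂ ∈ E,
      pathInduced E e₁.1 e₁.2 ⊆ pathInduced E e₂.1 e₂.2 ∨
      pathInduced E e₂.1 e₂.2 ⊆ pathInduced E e₁.1 e₁.2 ∨
      Disjoint (pathInduced E e₁.1 e₁.2) (pathInduced E e₂.1 e₂.2)) :
    (∀ E' ⊆ E,
      ((∀ u v : V,
          sInf {x : ℝ | ∃ s t : V, s ≠ t ∧ (∃ p, IsWalk E s t p ∧ p ≠ []) ∧
            x = 1 / (maxFlow E s t : ℝ)} * (maxFlow E u v : ℝ) ≤ (maxFlow E' u v : ℝ)) ↔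
        (∀ u v : V, (∃ p, IsWalk E u v p) → ∃ p, IsWalk E' u v p))) ∧
    (∀ u v : V, (∃ p, IsWalk E u v p) →
      ∃ p, IsWalk (E.filter fun e => ∀ q, IsPath E e.1 e.2 q → q = [e]) u v p) ∧
    (∀ E' ⊆ E, (∀ u v : V, (∃ p, IsWalk E u v p) → ∃ p, IsWalk E' u v p) →
      (E.filter fun e => ∀ q, IsPath E e.1 e.2 q → q = [e]).card ≤ E'.card) := by
  set S : Set ℝ := {x : ℝ | ∃ s t : V, s ≠ t ∧ (∃ p, IsWalk E s t p ∧ p ≠ []) ∧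
      x = 1 / (maxFlow E s t : ℝ)} with hS
  have hSnonneg : ∀ x ∈ S, (0 : ℝ) ≤ x := by
    rintro x ⟨s, t, _, _, rfl⟩
    positivity
  have hSbdd : BddBelow S := ⟨0, hSnonneg⟩
  refine ⟨?_, ?_, ?_⟩
  · -- Part 1: the iff
    intro E' hE'
    constructor
    · -- MCPS bound implies reachability preserved
      intro hineq u v ⟨p, hp⟩
      by_cases huv : u = v
      · subst huv; exact ⟨[], rfl⟩
      · have hm1 : 1 ≤ maxFlow E u v := one_le_maxFlow hp huv
        have hpne : p ≠ [] := by rintro rfl; exact huv hp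
        have hx0 : 1 / (maxFlow E u v : ℝ) ∈ S := ⟨u, v, huv, ⟨p, hp, hpne⟩, rfl⟩
        have hcard : 0 < E.card := by
          rcases p with _ | ⟨e, p'⟩
          · exact absurd rfl hpne
          · exact Finset.card_pos.2 ⟨e, hp.1⟩
        have hlb : ∀ x ∈ S, 1 / (E.card : ℝ) ≤ x := by
          rintro x ⟨s, t, hst, ⟨r, hr, hrne⟩, rfl⟩
          have h1 : 1 ≤ maxFlow E s t := one_le_maxFlow hr hst
          have h2 : maxFlow E s t ≤ E.card := maxFlow_le_card hst
          apply one_div_le_one_div_of_le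
          · exact_mod_cast h1
          · exact_mod_cast h2
        have hα : 1 / (E.card : ℝ) ≤ sInf S := le_csInf ⟨_, hx0⟩ hlb
        have hαpos : 0 < sInf S :=
          lt_of_lt_of_le (by positivity) hα
        have hpos : (0 : ℝ) < (maxFlow E' u v : ℝ) := by
          refine lt_of_lt_of_le ?_ (hineq u v)
          exact mul_pos hαpos (by exact_mod_cast hm1)
        have : 1 ≤ maxFlow E' u v := by
          have := Nat.cast_pos (α := ℝ).1 hpos
          omega
        exact exists_walk_of_maxFlow_pos this
    · -- reachability preserved implies MCPS bound
      intro hreach u v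
      by_cases hm : maxFlow E u v = 0
      · rw [hm]
        simp only [Nat.cast_zero, mul_zero]
        exact Nat.cast_nonneg _
      · have hm1 : 1 ≤ maxFlow E u v := Nat.one_le_iff_ne_zero.2 hm
        have huv : u ≠ v := by
          rintro rfl
          exact hm (maxFlow_self E u)
        obtain ⟨p, hp⟩ := exists_walk_of_maxFlow_pos hm1
        have hpne : p ≠ [] := by rintro rfl; exact huv hp
        have hx0 : 1 / (maxFlow E u v : ℝ) ∈ S := ⟨u, v, huv, ⟨p, hp, hpne⟩, rfl⟩
        obtain ⟨p', hp'⟩ := hreach u v ⟨p, hp⟩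
        have hm' : 1 ≤ maxFlow E' u v := one_le_maxFlow hp' huv
        have hmr : (0 : ℝ) < (maxFlow E u v : ℝ) := by exact_mod_cast hm1
        calc sInf S * (maxFlow E u v : ℝ)
            ≤ (1 / (maxFlow E u v : ℝ)) * (maxFlow E u v : ℝ) :=
              mul_le_mul_of_nonneg_right (csInf_le hSbdd hx0) (le_of_lt hmr)
          _ = 1 := by field_simp
          _ ≤ (maxFlow E' u v : ℝ) := by exact_mod_cast hm'
  · -- Part 2: the transitive reduction preserves reachability
    rintro u v ⟨p, hp⟩
    refine walk_concat hp ?_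
    intro f hf
    exact reach_reduction hsimple hP1 hP2 (pathInduced E f.1 f.2).card f
      (walk_mem_E hp f hf) le_rfl
  · -- Part 3: minimality
    intro E' hE' hreach
    apply Finset.card_le_card
    intro e heF
    obtain ⟨he, hprop⟩ := Finset.mem_filter.1 heF
    have hne : e.1 ≠ e.2 := hsimple e he
    obtain ⟨p', hp'⟩ := hreach e.1 e.2 ⟨[e], he, rfl, rfl⟩
    obtain ⟨q, hq, -⟩ := walk_to_path hp'
    have hqE : IsPath E e.1 e.2 q := ⟨walk_mono hE' hq.1, hq.2⟩
    have : q = [e] := hprop q hqE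
    exact walk_mem_E hq.1 e (this ▸ by simp)
end
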